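/- Let A be an n×n real matrix admitting a factorization A = LU with L lower unitriangular and U upper triangular. For any indices i ≤ j, if the leading principal (i−1)×(i−1) submatrix of A is invertible, then U_{ij} = det(B) / det(A_{[i−1]}), where B is the i×i submatrix of A formed from rows 1,…,i and columns 1,…,i−1, j, and A_{[i−1]} is the leading principal (i−1)×(i−1) submatrix of A. In particular, every entry of U is the last pivot of the LU factorization of some submatrix of A. -/
import Mathlib


open Matrix

/-- `M` is lower triangular with all diagonal entries equal to `1`. -/
def IsLowerUnitri {k : ℕ} (M : Matrix (Fin k) (Fin k) ℝ) : Prop :=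
  (∀ i, M i i = 1) ∧ ∀ i j : Fin k, i < j → M i j = 0

/-- `M` is upper triangular. -/
def IsUpperTri {k : ℕ} (M : Matrix (Fin k) (Fin k) ℝ) : Prop :=
  ∀ i j : Fin k, j < i → M i j = 0

lemma sum_restrict {n m : ℕ} (hm : m ≤ n) (f : Fin n → ℝ)
    (h0 : ∀ k : Fin n, m ≤ (k : ℕ) → f k = 0) :
    ∑ k : Fin n, f k = ∑ k : Fin m, f (Fin.castLE hm k) := by
  classical
  have h1 : ∑ k : Fin m, f (Fin.castLE hm k)
      = ∑ k ∈ Finset.univ.map (Fin.castLEEmb hm), f k := by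
    rw [Finset.sum_map]; rfl
  rw [h1]
  symm
  apply Finset.sum_subset (Finset.subset_univ _)
  intro k _ hk
  apply h0
  by_contra h
  push_neg at h
  exact hk (Finset.mem_map.2 ⟨⟨(k : ℕ), h⟩, Finset.mem_univ _, rfl⟩)

lemma key {n m : ℕ} (hm : m ≤ n) (A L U : Matrix (Fin n) (Fin n) ℝ)
    (hL : IsLowerUnitri L) (hU : IsUpperTri U) (hA : A = L * U)
    (c : Fin m → Fin n) (hc : ∀ k s : Fin m, s < k → (c s : ℕ) < (k : ℕ)) :
    (A.submatrix (Fin.castLE hm) c).det = ∏ k : Fin m, U (Fin.castLE hm k) (c k) := by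
  have hB : A.submatrix (Fin.castLE hm) c
      = (L.submatrix (Fin.castLE hm) (Fin.castLE hm)) * (U.submatrix (Fin.castLE hm) c) := by
    ext r s
    simp only [hA, Matrix.mul_apply, Matrix.submatrix_apply]
    refine sum_restrict hm (fun k => L (Fin.castLE hm r) k * U k (c s)) (fun k hk => ?_)
    have : L (Fin.castLE hm r) k = 0 := hL.2 _ _ (by rw [Fin.lt_def]; simp; omega)
    simp only [this, zero_mul]
  rw [hB, Matrix.det_mul]
  have hLtri : (L.submatrix (Fin.castLE hm) (Fin.castLE hm)).BlockTriangular OrderDual.toDual := by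
    intro r s hrs
    exact hL.2 _ _ (by rw [Fin.lt_def]; exact hrs)
  have hUtri : (U.submatrix (Fin.castLE hm) c).BlockTriangular id := by
    intro r s hrs
    exact hU _ _ (by rw [Fin.lt_def]; simpa using hc r s hrs)
  rw [Matrix.det_of_lowerTriangular _ hLtri, Matrix.det_of_upperTriangular hUtri]
  simp [hL.1]

theorem stmt_6 {n : ℕ}
    (A L U : Matrix (Fin n) (Fin n) ℝ)
    (hL : IsLowerUnitri L) (hU : IsUpperTri U)
    (hA : A = L * U)
    (i j : Fin n) (hij : i ≤ j)
    (hdet : IsUnit ((A.submatrix (Fin.castLE i.isLt.le) (Fin.castLE i.isLt.le) :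
        Matrix (Fin (i : ℕ)) (Fin (i : ℕ)) ℝ)).det) :
    U i j
      = ((A.submatrix (Fin.castLE i.isLt)
            (fun k : Fin ((i : ℕ) + 1) =>
              if h : (k : ℕ) < (i : ℕ) then (⟨(k : ℕ), lt_trans h i.isLt⟩ : Fin n) else j) :
          Matrix (Fin ((i : ℕ) + 1)) (Fin ((i : ℕ) + 1)) ℝ)).det
        / ((A.submatrix (Fin.castLE i.isLt.le) (Fin.castLE i.isLt.le) :
            Matrix (Fin (i : ℕ)) (Fin (i : ℕ)) ℝ)).det := by
  set c : Fin ((i : ℕ) + 1) → Fin n := fun k =>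
    if h : (k : ℕ) < (i : ℕ) then (⟨(k : ℕ), lt_trans h i.isLt⟩ : Fin n) else j with hc_def
  have h1 : (A.submatrix (Fin.castLE i.isLt.le) (Fin.castLE i.isLt.le)).det
      = ∏ k : Fin (i : ℕ), U (Fin.castLE i.isLt.le k) (Fin.castLE i.isLt.le k) :=
    key i.isLt.le A L U hL hU hA _ (fun k s hks => by simpa using hks)
  have h2 : (A.submatrix (Fin.castLE i.isLt) c).det
      = ∏ k : Fin ((i : ℕ) + 1), U (Fin.castLE i.isLt k) (c k) := by
    refine key i.isLt A L U hL hU hA c (fun k s hks => ?_)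
    have hk : (k : ℕ) ≤ (i : ℕ) := Nat.lt_succ_iff.mp k.isLt
    rw [hc_def]
    by_cases h : (s : ℕ) < (i : ℕ)
    · simp only [h, dif_pos]; exact hks
    · exfalso; omega
  have h3 : ∏ k : Fin ((i : ℕ) + 1), U (Fin.castLE i.isLt k) (c k)
      = (∏ k : Fin (i : ℕ), U (Fin.castLE i.isLt.le k) (Fin.castLE i.isLt.le k)) * U i j := by
    rw [Fin.prod_univ_castSucc]
    congr 1
    · apply Finset.prod_congr rfl
      intro k _
      have hk : ((Fin.castSucc k : Fin ((i:ℕ)+1)) : ℕ) < (i : ℕ) := k.isLt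
      have e1 : Fin.castLE i.isLt (Fin.castSucc k) = Fin.castLE i.isLt.le k := Fin.ext rfl
      have e2 : c (Fin.castSucc k) = Fin.castLE i.isLt.le k := by
        rw [hc_def]; simp only [hk, dif_pos]; exact Fin.ext rfl
      rw [e1, e2]
    · have e1 : Fin.castLE i.isLt (Fin.last (i : ℕ)) = i := Fin.ext rfl
      have e2 : c (Fin.last (i : ℕ)) = j := by rw [hc_def]; simp
      rw [e1, e2]
  have hne : (A.submatrix (Fin.castLE i.isLt.le) (Fin.castLE i.isLt.le)).det ≠ 0 :=
    hdet.ne_zero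
  rw [h1] at hne
  rw [h2, h3, h1]
  rw [mul_comm, mul_div_assoc, div_self hne, mul_one]
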